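/- arXiv:1902.10564 — 2 statements merged into one kernel-verified Lean document; each statement's English description precedes it below -/
import Mathlib

section
/- Assume G is a finitely generated subgroup of diff^{1+Lip}(K) containing no free subsemigroup on two generators, and G_1 is a finite-index subgroup of G such that every minimal invariant set of the action of G_1 on K is a singleton consisting of a point of Fix(G_1), and g'(p) > 0 for every g ∈ G_1 and every p ∈ Fix(G_1). Let p ∈ Fix(G_1) be isolated on the left in Fix(G_1) but accumulated on the left by K. Then there exist h ∈ G_1 and α > 0 such that h is increasing on [p−α, p] and h(x) > x for every x ∈ [p−α, p) ∩ K. -/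
open Set

/-- `K` is a Cantor set in `ℝ`: nonempty, compact, totally disconnected, perfect. -/
def IsCantorInR (K : Set ℝ) : Prop :=
  K.Nonempty ∧ IsCompact K ∧ IsTotallyDisconnected K ∧ Perfect K

open Classical in
/-- Apply a permutation of `K` to a real number (identity outside `K`). -/
noncomputable def apK (K : Set ℝ) (f : Equiv.Perm K) (y : ℝ) : ℝ :=
  if h : y ∈ K then (f ⟨y, h⟩ : ℝ) else y

/-- `f` locally coincides with a `C¹` embedding of an open interval with
nowhere-vanishing derivative. -/
def IsD1 (K : Set ℝ) (f : Equiv.Perm K) : Prop :=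
  ∀ x : K, ∃ a b : ℝ, (x : ℝ) ∈ Set.Ioo a b ∧
    ∃ F F' : ℝ → ℝ,
      (∀ y ∈ Set.Ioo a b, HasDerivAt F (F' y) y ∧ F' y ≠ 0) ∧
      ContinuousOn F' (Set.Ioo a b) ∧
      Set.InjOn F (Set.Ioo a b) ∧
      (∀ y : ℝ, y ∈ Set.Ioo a b → y ∈ K → F y = apK K f y)

/-- `f` locally coincides with a `C¹` embedding of an open interval with
nowhere-vanishing derivative whose log-derivative is Lipschitz. -/
def IsD1Lip (K : Set ℝ) (f : Equiv.Perm K) : Prop :=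
  ∀ x : K, ∃ a b : ℝ, (x : ℝ) ∈ Set.Ioo a b ∧
    ∃ F F' : ℝ → ℝ,
      (∀ y ∈ Set.Ioo a b, HasDerivAt F (F' y) y ∧ F' y ≠ 0) ∧
      ContinuousOn F' (Set.Ioo a b) ∧
      Set.InjOn F (Set.Ioo a b) ∧
      (∃ C : NNReal, LipschitzOnWith C (fun y => Real.log |F' y|) (Set.Ioo a b)) ∧
      (∀ y : ℝ, y ∈ Set.Ioo a b → y ∈ K → F y = apK K f y)

/-- membership in `diff¹(K)`: a homeomorphism of `K` locally coinciding
with `C¹` diffeomorphisms of intervals of `ℝ`. -/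
def MemDiff1 (K : Set ℝ) (f : Equiv.Perm K) : Prop :=
  Continuous (fun x : K => f x) ∧ Continuous (fun x : K => f.symm x) ∧ IsD1 K f

/-- membership in `diff^{1+Lip}(K)`. -/
def MemDiffLip (K : Set ℝ) (f : Equiv.Perm K) : Prop :=
  Continuous (fun x : K => f x) ∧ Continuous (fun x : K => f.symm x) ∧ IsD1Lip K f

/-- The derivative of `f` at `x`, as a limit of difference quotients within `K`. -/
def HasDerivOnK (K : Set ℝ) (f : Equiv.Perm K) (x d : ℝ) : Prop :=
  Filter.Tendsto (fun y : ℝ => (apK K f y - apK K f x) / (y - x))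
    (nhdsWithin x (K \ {x})) (nhds d)

/-- `f` is increasing on the interval `I`: it coincides on `I ∩ K` with an
increasing `C¹` diffeomorphism of `I` onto an interval of `ℝ`. -/
def IncreasingOnK (K : Set ℝ) (f : Equiv.Perm K) (I : Set ℝ) : Prop :=
  ∃ F F' : ℝ → ℝ,
    StrictMonoOn F I ∧
    (∀ y ∈ I, HasDerivWithinAt F (F' y) I y ∧ 0 < F' y) ∧
    ContinuousOn F' I ∧
    (∀ y ∈ I, y ∈ K → F y = apK K f y)

/-- `A` is invariant under the subgroup `G`. -/
def IsInvariantSet (K : Set ℝ) (G : Subgroup (Equiv.Perm K)) (A : Set ℝ) : Prop :=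
  ∀ g ∈ G, ∀ x ∈ A, apK K g x ∈ A

/-- `A` is a minimal invariant set for the action of `G` on `K`. -/
def IsMinimalInvariantSet (K : Set ℝ) (G : Subgroup (Equiv.Perm K)) (A : Set ℝ) : Prop :=
  A.Nonempty ∧ A ⊆ K ∧ IsClosed A ∧ IsInvariantSet K G A ∧
    ∀ B : Set ℝ, B.Nonempty → B ⊆ A → IsClosed B → IsInvariantSet K G B → B = A

/-- The set of points of `K` fixed by every element of `H`. -/
def fixedSet (K : Set ℝ) (H : Subgroup (Equiv.Perm K)) : Set ℝ :=
  {x | x ∈ K ∧ ∀ g ∈ H, apK K g x = x}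

/-- `a, b` generate a free subsemigroup: distinct nonempty positive words in
`a` and `b` define distinct elements. -/
def IsFreePair {M : Type*} [Monoid M] (a b : M) : Prop :=
  ∀ w₁ w₂ : List Bool, w₁ ≠ [] → w₂ ≠ [] →
    (w₁.map (fun t => if t then a else b)).prod = (w₂.map (fun t => if t then a else b)).prod →
    w₁ = w₂

/-- `G` contains no free subsemigroup on two generators. -/
def HasNoFreeSubsemigroup {Γ : Type*} [Group Γ] (G : Subgroup Γ) : Prop :=
  ¬ ∃ a ∈ G, ∃ b ∈ G, IsFreePair a b

/-- `p` is accumulated on the left by `A`. -/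
def AccLeft (p : ℝ) (A : Set ℝ) : Prop := ∀ α > 0, (Set.Ico (p - α) p ∩ A).Nonempty

/-- `p` is accumulated on the right by `A`. -/
def AccRight (p : ℝ) (A : Set ℝ) : Prop := ∀ α > 0, (Set.Ioc p (p + α) ∩ A).Nonempty

open Filter Topology Function
open scoped Pointwise

/-!
Let `S` be a finite symmetric generating set of `G₁`. As their derivatives at the common fixed point
`p` are positive, all elements of `S` are increasing on `K ∩ [c, p]` for some `c < p`. Suppose that
no element of `G₁` pushes a whole left neighbourhood of `p` in `K` to the right. By an intermediate
value argument on the compact set `K`, every `s ∈ S` then has fixed points accumulating at `p` from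
the left, while, `p` being isolated on the left in `Fix(G₁)`, every point of `K` close to `p` is
moved by some `s ∈ S`. Fix such a point `x₀` and, among the elements of `S` moving it, take the one,
`u`, whose gap `(a, b) ∋ x₀` (a component of the complement of its fixed points) reaches furthest
to the left. The right end `b` is moved by some `f ∈ S`, whose gap around `b` cannot start before
`a`; hence `v = f` or `v = f⁻¹` maps `b` into `(a, b)`. Replacing `u` by `u⁻¹` if needed, the
iterates of `u` push `[v (v b), b)` towards `b`, and for large `n` the elements `u ^ n` and
`v * u ^ n` play ping-pong on `(v b, b)` and `[v (v b), v b]`. They generate a free subsemigroup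
of `G`, a contradiction.
-/

def wordProd {M : Type*} [Monoid M] (a b : M) (w : List Bool) : M :=
  (w.map fun t => if t then a else b).prod

theorem wordProd_cons {M : Type*} [Monoid M] (a b : M) (t : Bool) (w : List Bool) :
    wordProd a b (t :: w) = (if t then a else b) * wordProd a b w := rfl

section PingPong

variable {G α : Type*} [Group G] [MulAction G α] {a b : G} {A B : Set α}

theorem mapsTo_wordProd_cons (ha : MapsTo (a • ·) (A ∪ B) A) (hb : MapsTo (b • ·) (A ∪ B) B)
    (t : Bool) (w : List Bool) :
    MapsTo (wordProd a b (t :: w) • ·) (A ∪ B) (if t then A else B) := by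
  have hunion : ∀ w : List Bool, MapsTo (wordProd a b w • ·) (A ∪ B) (A ∪ B) := by
    intro w
    induction w with
    | nil => intro x hx; simpa [wordProd] using hx
    | cons t w ih =>
      intro x hx
      simp only [wordProd_cons, mul_smul]
      cases t
      exacts [Or.inr (hb (ih hx)), Or.inl (ha (ih hx))]
  intro x hx
  simp only [wordProd_cons, mul_smul]
  cases t
  exacts [hb (hunion w hx), ha (hunion w hx)]

theorem wordProd_cons_ne_one (hA : A.Nonempty) (hB : B.Nonempty) (hAB : Disjoint A B)
    (ha : MapsTo (a • ·) (A ∪ B) A) (hb : MapsTo (b • ·) (A ∪ B) B) (t : Bool) (w : List Bool) :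
    wordProd a b (t :: w) ≠ 1 := by
  intro h
  obtain ⟨x, hx, hx'⟩ : ∃ x ∈ A ∪ B, x ∉ if t then A else B := by
    cases t
    · obtain ⟨x, hx⟩ := hA
      exact ⟨x, Or.inl hx, disjoint_left.1 hAB hx⟩
    · obtain ⟨x, hx⟩ := hB
      exact ⟨x, Or.inr hx, disjoint_right.1 hAB hx⟩
  exact hx' (by simpa [h] using mapsTo_wordProd_cons ha hb t w hx)

theorem wordProd_injective (hA : A.Nonempty) (hB : B.Nonempty) (hAB : Disjoint A B)
    (ha : MapsTo (a • ·) (A ∪ B) A) (hb : MapsTo (b • ·) (A ∪ B) B) :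
    Injective (wordProd a b) := by
  have hne := wordProd_cons_ne_one hA hB hAB ha hb
  intro w₁
  induction w₁ with
  | nil =>
    rintro (_ | ⟨t, w⟩) h
    exacts [rfl, absurd h.symm (hne t w)]
  | cons t₁ w₁ ih =>
    rintro (_ | ⟨t₂, w₂⟩) h
    · exact absurd h (hne t₁ w₁)
    obtain rfl : t₁ = t₂ := by
      obtain ⟨x, hx⟩ := hA
      have h₁ := mapsTo_wordProd_cons ha hb t₁ w₁ (Or.inl hx)
      have h₂ := mapsTo_wordProd_cons ha hb t₂ w₂ (Or.inl hx)
      rw [h] at h₁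
      cases t₁ <;> cases t₂
      all_goals first
        | rfl
        | exact absurd h₁ (disjoint_right.1 hAB h₂)
        | exact absurd h₁ (disjoint_left.1 hAB h₂)
    rw [ih (mul_left_cancel (a := if t₁ then a else b) h)]

theorem isFreePair_of_pingPong (hA : A.Nonempty) (hB : B.Nonempty) (hAB : Disjoint A B)
    (ha : MapsTo (a • ·) (A ∪ B) A) (hb : MapsTo (b • ·) (A ∪ B) B) : IsFreePair a b :=
  fun _ _ _ _ h => wordProd_injective hA hB hAB ha hb h

end PingPong

theorem StrictMonoOn.iterate {α : Type*} [Preorder α] {f : α → α} {s : Set α}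
    (hf : StrictMonoOn f s) (hs : MapsTo f s s) (n : ℕ) : StrictMonoOn f^[n] s := by
  induction n with
  | zero => exact strictMonoOn_id
  | succ n ih => rw [iterate_succ]; exact ih.comp hf hs

theorem exists_fixedPt_mem_Icc {α : Type*} [LinearOrder α] [TopologicalSpace α]
    [OrderClosedTopology α] [CompactSpace α] {f : α → α} (hf : Continuous f) {x y : α}
    (hxy : x ≤ y) (hmono : StrictMonoOn f (Icc x y)) (hx : x ≤ f x) (hy : f y ≤ y) :
    ∃ z ∈ Icc x y, f z = z := by
  obtain ⟨z, ⟨hz, hzf⟩, hz_max⟩ : ∃ z, IsGreatest (Icc x y ∩ {z | z ≤ f z}) z :=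
    (isClosed_Icc.inter (isClosed_le continuous_id hf)).isCompact.exists_isGreatest
      ⟨x, ⟨le_rfl, hxy⟩, hx⟩
  rcases hzf.eq_or_lt with h | hlt
  · exact ⟨z, hz, h.symm⟩
  obtain ⟨z', ⟨hz', hz'f⟩, hz'_min⟩ : ∃ z', IsLeast (Icc z y ∩ {w | f w ≤ w}) z' :=
    (isClosed_Icc.inter (isClosed_le hf continuous_id)).isCompact.exists_isLeast
      ⟨y, ⟨hz.2, le_rfl⟩, hy⟩
  have hzz' : z < z' := hz'.1.lt_of_ne (by rintro rfl; exact hlt.not_ge hz'f)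
  have hfz' : f z < z' := (hmono hz ⟨hz.1.trans hz'.1, hz'.2⟩ hzz').trans_le hz'f
  -- `f z` lies strictly between `z` and `z'`, where it can satisfy neither inequality.
  rcases le_total (f z) (f (f z)) with h | h
  · exact absurd (hz_max ⟨⟨hz.1.trans hlt.le, hfz'.le.trans hz'.2⟩, h⟩) hlt.not_ge
  · exact absurd (hz'_min ⟨⟨hlt.le, hfz'.le.trans hz'.2⟩, h⟩) hfz'.not_ge

theorem exists_lt_apply_and_exists_apply_lt {α : Type*} [LinearOrder α] {S : Set (Equiv.Perm α)}
    (hS_inv : ∀ s ∈ S, s⁻¹ ∈ S) {T : Set α} (hS_mono : ∀ s ∈ S, StrictMonoOn s T) {s : Equiv.Perm α}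
    (hs : s ∈ S) {x : α} (hx : x ∈ T) (hsx : s x ∈ T) (hne : s x ≠ x) :
    (∃ g ∈ S, fixedPoints g = fixedPoints s ∧ x < g x) ∧
      ∃ g ∈ S, fixedPoints g = fixedPoints s ∧ g x < x := by
  have hfix_inv : fixedPoints ⇑s⁻¹ = fixedPoints s := by
    rw [Equiv.Perm.coe_inv, fixedPoints_symm]
  have hmono_inv := hS_mono _ (hS_inv s hs)
  rcases hne.lt_or_gt with hlt | hgt
  · have hinv := hmono_inv hsx hx hlt
    simp only [Equiv.Perm.coe_inv, Equiv.symm_apply_apply] at hinv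
    exact ⟨⟨s⁻¹, hS_inv s hs, hfix_inv, hinv⟩, ⟨s, hs, rfl, hlt⟩⟩
  · have hinv := hmono_inv hx hsx hgt
    simp only [Equiv.Perm.coe_inv, Equiv.symm_apply_apply] at hinv
    exact ⟨⟨s, hs, rfl, hgt⟩, ⟨s⁻¹, hS_inv s hs, hfix_inv, hinv⟩⟩

theorem Subgroup.FG.of_relIndex_ne_zero {Γ : Type*} [Group Γ] {G H : Subgroup Γ} (hG : G.FG)
    (hHG : H ≤ G) (hidx : H.relIndex G ≠ 0) : H.FG := by
  classical
  have : Group.FG G := (Group.fg_iff_subgroup_fg G).2 hG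
  have : (H.subgroupOf G).FiniteIndex := ⟨hidx⟩
  obtain ⟨S, hS⟩ := (Group.fg_iff_subgroup_fg _).1 (Subgroup.fg_of_index_ne_zero (H.subgroupOf G))
  refine ⟨S.image G.subtype, ?_⟩
  rw [Finset.coe_image, ← MonoidHom.map_closure, hS, Subgroup.subgroupOf_map_subtype,
    inf_eq_left.2 hHG]

theorem Subgroup.FG.exists_finset_inv_mem {Γ : Type*} [Group Γ] [DecidableEq Γ] {H : Subgroup Γ}
    (hH : H.FG) : ∃ S : Finset Γ, (∀ s ∈ S, s⁻¹ ∈ S) ∧ Subgroup.closure (S : Set Γ) = H := by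
  obtain ⟨S, hS⟩ := hH
  refine ⟨S ∪ S⁻¹, fun s hs => ?_, ?_⟩
  · rw [Finset.mem_union, Finset.mem_inv', inv_inv] at *
    exact hs.symm
  · rw [Finset.coe_union, Finset.coe_inv, Subgroup.closure_union, Subgroup.closure_inv, sup_idem,
      hS]

section

variable {K : Set ℝ}

theorem apK_coe (f : Equiv.Perm K) (x : K) : apK K f x = f x := dif_pos x.2

theorem hasBasis_nhdsLT_subtype (p : K) :
    (𝓝[<] p).HasBasis (fun α : ℝ => 0 < α) fun α => Subtype.val ⁻¹' Ico ((p : ℝ) - α) p := by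
  have : 𝓝[<] p = comap Subtype.val (𝓝[<] (p : ℝ)) := by
    rw [nhdsWithin, nhds_subtype, nhdsWithin, comap_inf, comap_principal]
    rfl
  rw [this]
  refine ((nhdsLT_basis (p : ℝ)).to_hasBasis (fun l hl => ⟨(p - l) / 2, by linarith, ?_⟩)
    fun α hα => ⟨p - α, by linarith, Ioo_subset_Ico_self⟩).comap _
  exact fun x hx => ⟨by linarith [hx.1], hx.2⟩

theorem exists_lt_iterate (hK : IsClosed K) {f : K → K} (hf : Continuous f) {x b : K}
    (hmono : StrictMonoOn f (Icc x b)) (hfb : f b = b) (hx : x < f x)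
    (hfix : ∀ z ∈ Ioo x b, f z ≠ z) {c : K} (hc : c < b) : ∃ n, c < f^[n] x := by
  rcases lt_or_ge c x with hcx | hxc
  · exact ⟨0, hcx⟩
  have hmaps : MapsTo f (Ico x b) (Ico x b) := fun y hy =>
    ⟨hx.le.trans (hmono.monotoneOn ⟨le_rfl, (hxc.trans hc.le)⟩ (Ico_subset_Icc_self hy) hy.1),
      hfb ▸ hmono (Ico_subset_Icc_self hy) ⟨hy.1.trans hy.2.le, le_rfl⟩ hy.2⟩
  have horbit : ∀ n, f^[n] x ∈ Ico x b := fun n =>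
    hmaps.iterate n ⟨le_rfl, hxc.trans_lt hc⟩
  have hsm : StrictMono fun n => f^[n] x := by
    refine strictMono_nat_of_lt_succ fun n => ?_
    induction n with
    | zero => exact hx
    | succ n ih =>
      simpa only [iterate_succ_apply'] using
        hmono (Ico_subset_Icc_self (horbit n)) (Ico_subset_Icc_self (horbit (n + 1))) ih
  by_contra! hbdd
  -- the orbit increases to a fixed point of `f` in `(x, c]`
  have hreal : Monotone fun n => ((f^[n] x : K) : ℝ) := fun m n h => hsm.monotone h
  have hbdd' : BddAbove (range fun n => ((f^[n] x : K) : ℝ)) :=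
    ⟨c, forall_mem_range.2 fun n => hbdd n⟩
  have hlim := tendsto_atTop_ciSup hreal hbdd'
  set L := ⨆ n, ((f^[n] x : K) : ℝ)
  have hLK : L ∈ K := hK.mem_of_tendsto hlim (Eventually.of_forall fun n => (f^[n] x).2)
  have hfixL : f ⟨L, hLK⟩ = ⟨L, hLK⟩ :=
    isFixedPt_of_tendsto_iterate (tendsto_subtype_rng.2 hlim) hf.continuousAt
  refine hfix _ ⟨?_, ?_⟩ hfixL
  · exact (Subtype.coe_lt_coe.2 hx).trans_le (le_ciSup hbdd' 1)
  · exact (ciSup_le hbdd).trans_lt (Subtype.coe_lt_coe.2 hc)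

/-- The ping-pong sets are `(v b, b)` and `[v (v b), v b]`, with `n` chosen so that `u ^ n` pushes
`v (v b)` beyond `v b`. -/
theorem exists_isFreePair_pow_mul_pow (hK : IsClosed K) {u v : Equiv.Perm K} (hu : Continuous u)
    {b : K} (hub : u b = b) (hvb : v b < b) (hv : StrictMonoOn v (Icc (v b) b))
    (hu_mono : StrictMonoOn u (Icc (v (v b)) b)) (hu_fix : ∀ z ∈ Ioo (v (v b)) b, u z ≠ z)
    (hu_lt : v (v b) < u (v (v b))) : ∃ n : ℕ, IsFreePair (u ^ n) (v * u ^ n) := by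
  set t₀ := v b
  set t₁ := v t₀
  have ht₁ : t₁ < t₀ := hv (left_mem_Icc.2 hvb.le) (right_mem_Icc.2 hvb.le) hvb
  obtain ⟨n, hn⟩ := exists_lt_iterate hK hu hu_mono hub hu_lt hu_fix hvb
  have hmaps : MapsTo u (Icc t₁ b) (Icc t₁ b) := fun y hy =>
    ⟨hu_lt.le.trans (hu_mono.monotoneOn (left_mem_Icc.2 (ht₁.trans hvb).le) hy hy.1),
      hub ▸ hu_mono.monotoneOn hy (right_mem_Icc.2 (ht₁.trans hvb).le) hy.2⟩
  have hpush : MapsTo u^[n] (Ico t₁ b) (Ioo t₀ b) := fun y hy =>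
    have hiter := hu_mono.iterate hmaps n
    ⟨hn.trans_le (hiter.monotoneOn (left_mem_Icc.2 (ht₁.trans hvb).le)
        (Ico_subset_Icc_self hy) hy.1),
      iterate_fixed hub n ▸ hiter (Ico_subset_Icc_self hy)
        (right_mem_Icc.2 (ht₁.trans hvb).le) hy.2⟩
  have hunion : Ioo t₀ b ∪ Icc t₁ t₀ ⊆ Ico t₁ b := union_subset
    (fun y hy => ⟨ht₁.le.trans hy.1.le, hy.2⟩) (fun y hy => ⟨hy.1, hy.2.trans_lt hvb⟩)
  refine ⟨n, isFreePair_of_pingPong (A := Ioo t₀ b) (B := Icc t₁ t₀)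
    ⟨_, hpush ⟨le_rfl, ht₁.trans hvb⟩⟩ ⟨t₀, ht₁.le, le_rfl⟩
    (disjoint_left.2 fun y hA hB => hA.1.not_ge hB.2) (fun y hy => ?_) (fun y hy => ?_)⟩
  · simpa only [Equiv.Perm.smul_def, Equiv.Perm.coe_pow] using hpush (hunion hy)
  · have hy' := hpush (hunion hy)
    simp only [Equiv.Perm.smul_def, Equiv.Perm.coe_mul, Equiv.Perm.coe_pow, comp_apply]
    exact ⟨hv.monotoneOn (left_mem_Icc.2 hvb.le) (Ioo_subset_Icc_self hy') hy'.1.le,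
      (hv (Ioo_subset_Icc_self hy') (right_mem_Icc.2 hvb.le) hy'.2).le⟩

section

variable [CompactSpace K] {S : Finset (Equiv.Perm K)} {c p : K}

theorem frequently_apply_eq_of_frequently_apply_le {s : Equiv.Perm K}
    (hs : Continuous s) (hs_inv : Continuous ⇑s⁻¹) (hsp : s p = p) (hcp : c < p)
    (hmono : StrictMonoOn s (Icc c p)) (hle : ∃ᶠ x in 𝓝[<] p, s x ≤ x)
    (hle_inv : ∃ᶠ x in 𝓝[<] p, s⁻¹ x ≤ x) : ∃ᶠ x in 𝓝[<] p, s x = x := by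
  intro hne
  have hbasis := hasBasis_nhdsLT_subtype p
  obtain ⟨α, hα, hnear⟩ := hbasis.eventually_iff.1 (hne.and (Ioo_mem_nhdsLT hcp))
  have hwindow : ∀ᶠ x : K in 𝓝[<] p, (x : ℝ) ∈ Ico ((p : ℝ) - α) p := hbasis.mem_of_mem hα
  have hinv_near : ∀ᶠ x in 𝓝[<] p, (p : ℝ) - α < s⁻¹ x := by
    have hsp' : s⁻¹ p = p := by rw [Equiv.Perm.inv_eq_iff_eq, hsp]
    refine ((continuous_subtype_val.comp hs_inv).continuousAt (x := p)).eventually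
      (eventually_gt_nhds ?_) |>.filter_mono nhdsWithin_le_nhds
    simp only [comp_apply, hsp']
    linarith
  obtain ⟨x₁, hx₁, hy, hx₁_mem⟩ := (hle_inv.and_eventually (hinv_near.and hwindow)).exists
  set y := s⁻¹ x₁
  have hy_mem : (y : ℝ) ∈ Ico ((p : ℝ) - α) p :=
    ⟨hy.le, (Subtype.coe_le_coe.2 hx₁).trans_lt hx₁_mem.2⟩
  obtain ⟨x₂, hx₂, hyx₂, hx₂p⟩ :=
    (hle.and_eventually (Ioo_mem_nhdsLT (show y < p from hy_mem.2))).exists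
  -- `s` sends `y` up to `x₁` and does not send `x₂` up
  obtain ⟨z, hz, hsz⟩ := exists_fixedPt_mem_Icc hs hyx₂.le
    (hmono.mono (Icc_subset_Icc (hnear hy_mem).2.1.le hx₂p.le)) (by simpa [y] using hx₁) hx₂
  exact (hnear (x := z) ⟨hy_mem.1.trans hz.1, hz.2.trans_lt hx₂p⟩).1 hsz

theorem exists_isFreePair_of_gap (hS_inv : ∀ s ∈ S, s⁻¹ ∈ S)
    (hS_cont : ∀ s ∈ S, Continuous s) (hS_mono : ∀ s ∈ S, StrictMonoOn s (Icc c p))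
    {u f : Equiv.Perm K} (hu : u ∈ S) (hf : f ∈ S) {a a' b z : K} (hca : c ≤ a) (haa' : a ≤ a')
    (ha'b : a' < b) (hbz : b < z) (hzp : z ≤ p) (hua : u a = a) (hub : u b = b)
    (hu_gap : ∀ y ∈ Ioo a b, u y ≠ y) (hfa' : f a' = a') (hfz : f z = z) (hfb : f b ≠ b) :
    ∃ w ∈ S, ∃ v ∈ S, ∃ n : ℕ, IsFreePair (w ^ n) (v * w ^ n) := by
  have hIcc : ∀ {y₁ y₂}, a ≤ y₁ → y₂ ≤ z → Icc y₁ y₂ ⊆ Icc c p := fun h₁ h₂ =>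
    Icc_subset_Icc (hca.trans h₁) (h₂.trans hzp)
  have ha'_mem : a' ∈ Icc c p := hIcc haa' le_rfl ⟨le_rfl, (ha'b.trans hbz).le⟩
  have hb_mem : b ∈ Icc c p := hIcc (haa'.trans ha'b.le) le_rfl ⟨le_rfl, hbz.le⟩
  have hfb_mem : f b ∈ Icc c p := by
    have hf_mono := (hS_mono f hf).monotoneOn
    refine ⟨ha'_mem.1.trans ?_, (hf_mono hb_mem ⟨?_, hzp⟩ hbz.le).trans ?_⟩
    · exact hfa' ▸ hf_mono ha'_mem hb_mem ha'b.le
    · exact hb_mem.1.trans hbz.le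
    · rw [hfz]; exact hzp
  obtain ⟨-, v, hv, hv_fix, hvb⟩ :=
    exists_lt_apply_and_exists_apply_lt (S := S) hS_inv hS_mono hf hb_mem hfb_mem hfb
  have hva' : v a' = a' := (Set.ext_iff.1 hv_fix a').2 hfa'
  have hv_mono := hS_mono v hv
  have ha'vb : a' < v b := hva' ▸ hv_mono ha'_mem hb_mem ha'b
  have hvb_mem : v b ∈ Icc c p := hIcc (haa'.trans ha'vb.le) le_rfl ⟨le_rfl, (hvb.trans hbz).le⟩
  have ha'vvb : a' < v (v b) := hva' ▸ hv_mono ha'_mem hvb_mem ha'vb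
  have hvvb : v (v b) < b := (hv_mono hvb_mem hb_mem hvb).trans hvb
  have hvvb_mem : v (v b) ∈ Icc c p :=
    hIcc (haa'.trans ha'vvb.le) le_rfl ⟨le_rfl, (hvvb.trans hbz).le⟩
  have hu_vvb_mem : u (v (v b)) ∈ Icc c p := by
    have hu_mono := (hS_mono u hu).monotoneOn
    refine hIcc le_rfl hbz.le ⟨?_, ?_⟩
    · exact hua.symm.le.trans (hu_mono (hIcc le_rfl le_rfl ⟨le_rfl, (haa'.trans ha'b.le).trans
        hbz.le⟩) hvvb_mem (haa'.trans ha'vvb.le))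
    · exact (hu_mono hvvb_mem hb_mem hvvb.le).trans_eq hub
  obtain ⟨⟨w, hw, hw_fix, hw_lt⟩, -⟩ := exists_lt_apply_and_exists_apply_lt (S := S) hS_inv
    hS_mono hu hvvb_mem hu_vvb_mem (hu_gap _ ⟨haa'.trans_lt ha'vvb, hvvb⟩)
  obtain ⟨n, hn⟩ := exists_isFreePair_pow_mul_pow (isCompact_iff_compactSpace.2 ‹_›).isClosed
    (hS_cont w hw) ((Set.ext_iff.1 hw_fix b).2 hub) hvb
    (hv_mono.mono (hIcc (haa'.trans ha'vb.le) hbz.le))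
    ((hS_mono w hw).mono (hIcc (haa'.trans ha'vvb.le) hbz.le))
    (fun y hy hwy => hu_gap y ⟨(haa'.trans_lt ha'vvb).trans hy.1, hy.2⟩
      ((Set.ext_iff.1 hw_fix y).1 hwy)) hw_lt
  exact ⟨w, hw, v, hv, n, hn⟩

theorem exists_isFreePair_of_frequently_apply_le (hS_inv : ∀ s ∈ S, s⁻¹ ∈ S)
    (hS_cont : ∀ s ∈ S, Continuous s) (hS_p : ∀ s ∈ S, s p = p) (hcp : c < p)
    (hS_mono : ∀ s ∈ S, StrictMonoOn s (Icc c p)) (hmove : ∀ x ∈ Ioo c p, ∃ s ∈ S, s x ≠ x)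
    [(𝓝[<] p).NeBot] (hS_le : ∀ s ∈ S, ∃ᶠ x in 𝓝[<] p, s x ≤ x) :
    ∃ u ∈ S, ∃ v ∈ S, ∃ n : ℕ, IsFreePair (u ^ n) (v * u ^ n) := by
  have hfix_above : ∀ s ∈ S, ∀ y < p, ∃ z, y < z ∧ z < p ∧ s z = z := fun s hs y hy => by
    obtain ⟨z, hz, hyz, hzp⟩ := (frequently_apply_eq_of_frequently_apply_le (hS_cont s hs)
      (hS_cont _ (hS_inv s hs)) (hS_p s hs) hcp (hS_mono s hs) (hS_le s hs)
      (hS_le _ (hS_inv s hs))).and_eventually (Ioo_mem_nhdsLT hy) |>.exists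
    exact ⟨z, hyz, hzp, hz⟩
  have hanchor : ∀ᶠ x in 𝓝[<] p, ∀ s ∈ S, (fixedPoints s ∩ Icc c x).Nonempty := by
    refine (eventually_all_finset S).2 fun s hs => ?_
    obtain ⟨w, hcw, hwp, hw⟩ := hfix_above s hs c hcp
    exact mem_of_superset (Ioo_mem_nhdsLT hwp) fun x hx => ⟨w, hw, hcw.le, hx.1.le⟩
  obtain ⟨x₀, hanchor₀, hcx₀, hx₀p⟩ := (hanchor.and (Ioo_mem_nhdsLT hcp)).exists
  have : Nonempty K := ⟨p⟩
  -- `a s` is the last fixed point of `s` before `x₀`; `u` is chosen with the leftmost one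
  choose! a ha using fun s hs => ((isClosed_fixedPoints (hS_cont s hs)).inter
    isClosed_Icc).isCompact.exists_isGreatest (hanchor₀ s hs)
  obtain ⟨s₀, hs₀, hs₀x₀⟩ := hmove x₀ ⟨hcx₀, hx₀p⟩
  obtain ⟨u, hu, hu_min⟩ := S.exists_min_image a ⟨s₀, hs₀⟩
  have hax₀ : a u < x₀ := by
    refine (hu_min s₀ hs₀).trans_lt ((ha s₀ hs₀).1.2.2.lt_of_ne fun h => hs₀x₀ ?_)
    exact h ▸ (ha s₀ hs₀).1.1
  obtain ⟨z, hx₀z, hzp, huz⟩ := hfix_above u hu x₀ hx₀p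
  obtain ⟨b, ⟨hub, hb⟩, hb_min⟩ : ∃ b, IsLeast (fixedPoints u ∩ Icc x₀ z) b :=
    ((isClosed_fixedPoints (hS_cont u hu)).inter isClosed_Icc).isCompact.exists_isLeast
      ⟨z, huz, hx₀z.le, le_rfl⟩
  have hx₀b : x₀ < b := hb.1.lt_of_ne fun h => hax₀.not_ge ((ha u hu).2 ⟨h ▸ hub, hcx₀.le, le_rfl⟩)
  have hu_gap : ∀ y ∈ Ioo (a u) b, u y ≠ y := by
    intro y hy huy
    rcases le_total y x₀ with hyx₀ | hx₀y
    · exact hy.1.not_ge ((ha u hu).2 ⟨huy, (ha u hu).1.2.1.trans hy.1.le, hyx₀⟩)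
    · exact hy.2.not_ge (hb_min ⟨huy, hx₀y, hy.2.le.trans hb.2⟩)
  obtain ⟨f, hf, hfb⟩ := hmove b ⟨hcx₀.trans hx₀b, hb.2.trans_lt hzp⟩
  obtain ⟨z', hbz', hz'p, hfz'⟩ := hfix_above f hf b (hb.2.trans_lt hzp)
  exact exists_isFreePair_of_gap hS_inv hS_cont hS_mono hu hf (ha u hu).1.2.1
    (hu_min f hf) (((ha f hf).1.2.2).trans_lt hx₀b) hbz' hz'p.le (ha u hu).1.1 hub hu_gap
    (ha f hf).1.1 hfz' hfb

end

theorem IsD1Lip.isD1 {f : Equiv.Perm K} (hf : IsD1Lip K f) : IsD1 K f := fun x =>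
  let ⟨a, b, hx, F, F', hF, hF'_cont, hF_inj, _, hFf⟩ := hf x
  ⟨a, b, hx, F, F', hF, hF'_cont, hF_inj, hFf⟩

theorem IncreasingOnK.mono {f : Equiv.Perm K} {I J : Set ℝ} (hf : IncreasingOnK K f I)
    (hJI : J ⊆ I) : IncreasingOnK K f J :=
  let ⟨F, F', hF_mono, hF, hF'_cont, hFf⟩ := hf
  ⟨F, F', hF_mono.mono hJI, fun y hy => ⟨(hF y (hJI hy)).1.mono hJI, (hF y (hJI hy)).2⟩,
    hF'_cont.mono hJI, fun y hy => hFf y (hJI hy)⟩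

theorem IncreasingOnK.strictMonoOn {f : Equiv.Perm K} {I : Set ℝ} (hf : IncreasingOnK K f I) :
    StrictMonoOn f (Subtype.val ⁻¹' I) := by
  obtain ⟨F, -, hF_mono, -, -, hFf⟩ := hf
  intro x hx y hy hxy
  have := hF_mono hx hy hxy
  rwa [hFf x hx x.2, hFf y hy y.2, apK_coe, apK_coe] at this

theorem IsD1.exists_increasingOnK {f : Equiv.Perm K} (hf : IsD1 K f) {p d : ℝ} (hp : p ∈ K)
    (hacc : (𝓝[K \ {p}] p).NeBot) (hd : HasDerivOnK K f p d) (hd_pos : 0 < d) :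
    ∃ ρ > 0, IncreasingOnK K f (Icc (p - ρ) (p + ρ)) := by
  obtain ⟨A, B, hpAB, F, F', hF, hF'_cont, -, hFf⟩ := hf ⟨p, hp⟩
  have hAB : Ioo A B ∈ 𝓝 p := Ioo_mem_nhds hpAB.1 hpAB.2
  have hF'p : F' p = d := by
    refine tendsto_nhds_unique ?_ hd
    refine ((hasDerivAt_iff_tendsto_slope.1 (hF p hpAB).1).mono_left
      (nhdsWithin_mono p fun y hy => hy.2)).congr' ?_
    filter_upwards [mem_nhdsWithin_of_mem_nhds hAB, self_mem_nhdsWithin] with y hy hyK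
    rw [slope_def_field, hFf y hy hyK.1, hFf p hpAB hp]
  have hpos : ∀ᶠ y in 𝓝 p, y ∈ Ioo A B ∧ 0 < F' y :=
    eventually_and.2 ⟨hAB, (hF'_cont.continuousAt hAB).eventually
      (eventually_gt_nhds (hF'p ▸ hd_pos))⟩
  obtain ⟨ρ, hρ, hρ_sub⟩ := Metric.nhds_basis_closedBall.mem_iff.1 hpos
  rw [Real.closedBall_eq_Icc] at hρ_sub
  refine ⟨ρ, hρ, F, F', ?_, fun y hy => ⟨(hF y (hρ_sub hy).1).1.hasDerivWithinAt,
    (hρ_sub hy).2⟩, hF'_cont.mono fun y hy => (hρ_sub hy).1, fun y hy => hFf y (hρ_sub hy).1⟩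
  refine strictMonoOn_of_deriv_pos (convex_Icc _ _)
    (fun y hy => (hF y (hρ_sub hy).1).1.continuousAt.continuousWithinAt) fun y hy => ?_
  have hy' := hρ_sub (interior_subset hy)
  rw [(hF y hy'.1).1.deriv]
  exact hy'.2

theorem exists_forall_increasingOnK {S : Finset (Equiv.Perm K)} (hS : ∀ s ∈ S, IsD1 K s) {p : ℝ}
    (hp : p ∈ K) (hacc : (𝓝[K \ {p}] p).NeBot)
    (hS_pos : ∀ s ∈ S, ∃ d, HasDerivOnK K s p d ∧ 0 < d) :
    ∃ η > 0, ∀ s ∈ S, IncreasingOnK K s (Icc (p - η) p) := by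
  have : ∀ᶠ η in 𝓝[>] (0 : ℝ), ∀ s ∈ S, IncreasingOnK K s (Icc (p - η) p) := by
    refine (eventually_all_finset S).2 fun s hs => ?_
    obtain ⟨d, hd, hd_pos⟩ := hS_pos s hs
    obtain ⟨ρ, hρ, hρ_incr⟩ := (hS s hs).exists_increasingOnK hp hacc hd hd_pos
    filter_upwards [Ioo_mem_nhdsGT hρ] with η hη
    exact hρ_incr.mono (Icc_subset_Icc (by linarith [hη.2]) (by linarith))
  obtain ⟨η, hη, hη_pos⟩ := (this.and self_mem_nhdsWithin).exists
  exact ⟨η, hη_pos, hη⟩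

theorem AccLeft.neBot_nhdsLT {p : K} (h : AccLeft p K) : (𝓝[<] p).NeBot :=
  (frequently_true_iff_neBot _).1 <| (hasBasis_nhdsLT_subtype p).frequently_iff.2 fun α hα =>
    let ⟨x, hx, hxK⟩ := h α hα
    ⟨⟨x, hxK⟩, hx, trivial⟩

theorem frequently_apply_le_of_not_exists {f : Equiv.Perm K} {p : K} {η : ℝ} (hη : 0 < η)
    (hf : IncreasingOnK K f (Icc (p - η) p))
    (h : ¬ ∃ α : ℝ, 0 < α ∧ IncreasingOnK K f (Icc (p - α) p) ∧
      ∀ x ∈ Ico (p - α) p ∩ K, x < apK K f x) :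
    ∃ᶠ x in 𝓝[<] p, f x ≤ x := by
  refine (hasBasis_nhdsLT_subtype p).frequently_iff.2 fun α hα => ?_
  push Not at h
  obtain ⟨x, ⟨hx, hxK⟩, hfx⟩ := h (min α η) (lt_min hα hη)
    (hf.mono (Icc_subset_Icc (by linarith [min_le_right α η]) le_rfl))
  refine ⟨⟨x, hxK⟩, ⟨le_trans (by linarith [min_le_left α η]) hx.1, hx.2⟩, ?_⟩
  exact (apK_coe f ⟨x, hxK⟩).symm.trans_le hfx

theorem exists_apply_ne_of_closure_eq {S : Set (Equiv.Perm K)} {H : Subgroup (Equiv.Perm K)}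
    (hS : Subgroup.closure S = H) {x : K} (hx : (x : ℝ) ∉ fixedSet K H) : ∃ s ∈ S, s x ≠ x := by
  by_contra! h
  have hH : H ≤ MulAction.stabilizer (Equiv.Perm K) x := hS ▸ (Subgroup.closure_le _).2 h
  exact hx ⟨x.2, fun g hg => (apK_coe g x).trans (congrArg Subtype.val (hH hg))⟩

end

theorem no_fixed_point_on_left_general (K : Set ℝ) (hK : IsCantorInR K)
    (G : Subgroup (Equiv.Perm K))
    (hdiff : ∀ g ∈ G, MemDiffLip K g)
    (hFG : G.FG)
    (hfree : HasNoFreeSubsemigroup G)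
    (G₁ : Subgroup (Equiv.Perm K)) (hle : G₁ ≤ G) (hidx : G₁.relIndex G ≠ 0)
    (hpos : ∀ g ∈ G₁, ∀ p ∈ fixedSet K G₁, ∃ d : ℝ, HasDerivOnK K g p d ∧ 0 < d)
    (p : ℝ) (hp : p ∈ fixedSet K G₁)
    (hisol : ¬ AccLeft p (fixedSet K G₁))
    (haccK : AccLeft p K) :
    ∃ h ∈ G₁, ∃ α : ℝ, 0 < α ∧ IncreasingOnK K h (Set.Icc (p - α) p) ∧
      ∀ x ∈ Set.Ico (p - α) p ∩ K, x < apK K h x := by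
  classical
  have : CompactSpace K := isCompact_iff_compactSpace.1 hK.2.1
  obtain ⟨S, hS_inv, hS_gen⟩ := (hFG.of_relIndex_ne_zero hle hidx).exists_finset_inv_mem
  have hS : ∀ s ∈ S, s ∈ G₁ := fun s hs => hS_gen ▸ Subgroup.subset_closure hs
  have hSG : ∀ s ∈ S, MemDiffLip K s := fun s hs => hdiff s (hle (hS s hs))
  obtain ⟨η, hη, hη_incr⟩ := exists_forall_increasingOnK (fun s hs => (hSG s hs).2.2.isD1) hp.1
    (accPt_principal_iff_nhdsWithin.1 (hK.2.2.2.acc p hp.1)) fun s hs => hpos s (hS s hs) p hp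
  obtain ⟨α₀, hα₀, hα₀_fix⟩ : ∃ α₀ > 0, ∀ x ∈ Ico (p - α₀) p, x ∉ fixedSet K G₁ := by
    simpa [AccLeft, Set.Nonempty] using hisol
  obtain ⟨c, ⟨hc, hcp⟩, hcK⟩ := haccK (min η α₀) (lt_min hη hα₀)
  have := haccK.neBot_nhdsLT (p := ⟨p, hp.1⟩)
  by_contra hcon
  obtain ⟨u, hu, v, hv, n, huv⟩ := exists_isFreePair_of_frequently_apply_le
    (c := ⟨c, hcK⟩) (p := ⟨p, hp.1⟩) hS_inv (fun s hs => (hSG s hs).1)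
    (fun s hs => Subtype.ext ((apK_coe s _).symm.trans (hp.2 s (hS s hs)))) hcp
    (fun s hs => (hη_incr s hs).strictMonoOn.mono fun x hx =>
      ⟨(sub_le_sub_left (min_le_left η α₀) p).trans (hc.trans hx.1), hx.2⟩)
    (fun x hx => exists_apply_ne_of_closure_eq hS_gen (hα₀_fix x
      ⟨(sub_le_sub_left (min_le_right η α₀) p).trans (hc.trans hx.1.le), hx.2⟩))
    fun s hs => frequently_apply_le_of_not_exists hη (hη_incr s hs) fun h => hcon ⟨s, hS s hs, h⟩
  exact hfree ⟨u ^ n, hle (pow_mem (hS u hu) n), v * u ^ n,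
    hle (mul_mem (hS v hv) (pow_mem (hS u hu) n)), huv⟩

/-- If `p ∈ Fix(G₁)` is isolated on the left in `Fix(G₁)` but
accumulated on the left by `K`, some `h ∈ G₁` is increasing on `[p−α, p]` and
moves every point of `[p−α, p) ∩ K` to the right. -/
theorem no_fixed_point_on_left (K : Set ℝ) (hK : IsCantorInR K)
    (G : Subgroup (Equiv.Perm K))
    (hdiff : ∀ g ∈ G, MemDiffLip K g)
    (hFG : G.FG)
    (hfree : HasNoFreeSubsemigroup G)
    (G₁ : Subgroup (Equiv.Perm K)) (hle : G₁ ≤ G) (hidx : G₁.relIndex G ≠ 0)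
    (hmin : ∀ A : Set ℝ, IsMinimalInvariantSet K G₁ A → ∃ p ∈ fixedSet K G₁, A = {p})
    (hpos : ∀ g ∈ G₁, ∀ p ∈ fixedSet K G₁, ∃ d : ℝ, HasDerivOnK K g p d ∧ 0 < d)
    (p : ℝ) (hp : p ∈ fixedSet K G₁)
    (hisol : ¬ AccLeft p (fixedSet K G₁))
    (haccK : AccLeft p K) :
    ∃ h ∈ G₁, ∃ α : ℝ, 0 < α ∧ IncreasingOnK K h (Set.Icc (p - α) p) ∧
      ∀ x ∈ Set.Ico (p - α) p ∩ K, x < apK K h x :=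
  no_fixed_point_on_left_general K hK G hdiff hFG hfree G₁ hle hidx hpos p hp hisol haccK
end

section
/- Let I be an open interval of ℝ which meets K and whose endpoints belong to K, and let G be a subgroup of diff^1(K) such that: (1) every element of G maps I ∩ K onto I ∩ K and is increasing on I; (2) every element of G having a fixed point in I ∩ K restricts to the identity on I ∩ K. Then the group of restrictions to I ∩ K of elements of G is abelian; that is, g(h(x)) = h(g(x)) for all g, h ∈ G and all x ∈ I ∩ K. -/
open Set

/-!
Hölder's argument. Every element of `G` is increasing and continuous on `X = (a, b) ∩ K`, and
since `K` is closed, an element moving one point of `X` to the right and another one to the left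
has a fixed point in `X`, hence is trivial on `X`. So comparing `g x₀` with `h x₀` gives a total
preorder on `G` that does not depend on `x₀ ∈ X`; it is therefore invariant under multiplication
on both sides, and it is archimedean because an increasing orbit converging inside `X` would
converge to a fixed point. Hölder's theorem (an archimedean bi-ordered group is abelian) concludes.
-/

open Filter Topology

section FixedPoints

variable {f : ℝ → ℝ} {s : Set ℝ}

theorem exists_fixedPt_of_le_of_le {u v : ℝ} (hs : IsClosed (Icc u v ∩ s))
    (hmaps : MapsTo f s s) (hmono : MonotoneOn f s) (hf : ContinuousOn f s)
    (hu : u ∈ s) (hv : v ∈ s) (huv : u ≤ v) (hfu : u ≤ f u) (hfv : f v ≤ v) :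
    ∃ w ∈ s, f w = w := by
  set T := {x | x ∈ Icc u v ∩ s ∧ id x ≤ f x}
  have hT : IsCompact T :=
    isCompact_Icc.of_isClosed_subset (hs.isClosed_le continuousOn_id (hf.mono inter_subset_right))
      fun x hx => hx.1.1
  obtain ⟨w, ⟨⟨hwuv, hws⟩, hwf⟩, hwmax⟩ :=
    hT.exists_isGreatest ⟨u, ⟨left_mem_Icc.2 huv, hu⟩, hfu⟩
  refine ⟨w, hws, hwf.eq_or_lt.elim Eq.symm fun hlt => ?_⟩
  -- `w` is the last point of `T`, so `f w` cannot lie in `T`; this forces `v < f w ≤ f v`.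
  exfalso
  rcases le_or_gt (f w) v with hfwv | hvfw
  · have hfwT : f w ∈ T := ⟨⟨⟨hwuv.1.trans hlt.le, hfwv⟩, hmaps hws⟩, hmono hws (hmaps hws) hlt.le⟩
    exact (hwmax hfwT).not_gt hlt
  · exact ((hmono hws hv hwuv.2).trans hfv).not_gt hvfw

theorem exists_lt_iterate_of_lt_apply {x y : ℝ} (hs : IsClosed (Icc x y ∩ s))
    (hmaps : MapsTo f s s) (hf : ContinuousOn f s) (hlt : ∀ z ∈ s, z < f z) (hx : x ∈ s) :
    ∃ n : ℕ, y < f^[n] x := by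
  by_contra! hle
  have hmem (n : ℕ) : f^[n] x ∈ s := hmaps.iterate n hx
  have hmono : Monotone (f^[·] x) := monotone_nat_of_le_succ fun n => by
    rw [Function.iterate_succ_apply']
    exact (hlt _ (hmem n)).le
  have hL := tendsto_atTop_ciSup hmono ⟨y, forall_mem_range.2 hle⟩
  set L := ⨆ n, f^[n] x
  have hLs : L ∈ Icc x y ∩ s :=
    hs.mem_of_tendsto hL (Eventually.of_forall fun n => ⟨⟨hmono n.zero_le, hle n⟩, hmem n⟩)
  have hfL : Tendsto (fun n => f (f^[n] x)) atTop (𝓝 (f L)) :=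
    (hf L hLs.2).tendsto.comp (tendsto_nhdsWithin_iff.2 ⟨hL, Eventually.of_forall hmem⟩)
  have hshift : Tendsto (fun n => f (f^[n] x)) atTop (𝓝 L) := by
    simpa only [Function.comp_def, Function.iterate_succ_apply'] using
      hL.comp (tendsto_add_atTop_nat 1)
  exact (hlt L hLs.2).ne' (tendsto_nhds_unique hfL hshift)

end FixedPoints

section Holder

variable {Γ : Type*} [Group Γ] [Preorder Γ]

instance Group.mulLeftStrictMono_of_mulLeftMono [MulLeftMono Γ] : MulLeftStrictMono Γ where
  elim c _ _ h := lt_of_le_not_ge (mul_le_mul_right h.le c) fun h' =>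
    h.not_ge (le_of_mul_le_mul_left' h')

instance Group.mulRightStrictMono_of_mulRightMono [MulRightMono Γ] : MulRightStrictMono Γ where
  elim c _ _ h := lt_of_le_not_ge (mul_le_mul_left h.le c) fun h' =>
    h.not_ge (le_of_mul_le_mul_right' h')

variable [Std.Total (α := Γ) (· ≤ ·)] [MulLeftMono Γ] [MulRightMono Γ]

theorem exists_zpow_le_and_lt_zpow_succ (harch : ∀ {g : Γ}, 1 < g → ∀ h, ∃ n : ℕ, h < g ^ n)
    {g : Γ} (hg : 1 < g) (h : Γ) : ∃ p : ℤ, g ^ p ≤ h ∧ h < g ^ (p + 1) := by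
  have hmono : StrictMono (g ^ · : ℤ → Γ) := strictMono_int_of_lt_succ fun p => by
    simpa only [zpow_add_one] using lt_mul_of_one_lt_right' (g ^ p) hg
  obtain ⟨n, hn⟩ := harch hg h
  obtain ⟨m, hm⟩ := harch hg h⁻¹
  obtain ⟨p, hp, hmax⟩ := Int.exists_greatest_of_bdd (P := (g ^ · ≤ h))
    ⟨n, fun z hz => (hmono.lt_iff_lt.1 (hz.trans_lt (by simpa using hn))).le⟩
    ⟨-m, by simpa [zpow_neg] using (inv_lt'.1 hm).le⟩
  exact ⟨p, hp, Std.not_le.1 fun hle => (hmax _ hle).not_gt (lt_add_one p)⟩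

theorem exists_one_lt_mul_self_le {h c : Γ} (h1 : 1 < h) (hc : h < c) :
    ∃ e : Γ, 1 < e ∧ e * e ≤ c := by
  rcases total_of (· ≤ ·) (h * h) c with hle | hle
  · exact ⟨h, h1, hle⟩
  · refine ⟨h⁻¹ * c, lt_inv_mul_iff_mul_lt.2 (by simpa using hc), ?_⟩
    have : h⁻¹ * c * h⁻¹ ≤ 1 := by
      simpa [mul_assoc] using mul_le_mul_left (mul_le_mul_right hle h⁻¹) h⁻¹
    simpa [mul_assoc] using mul_le_mul_left this c

theorem exists_zpow_equiv_of_forall_not_lt (harch : ∀ {g : Γ}, 1 < g → ∀ h, ∃ n : ℕ, h < g ^ n)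
    {c : Γ} (hc : 1 < c) (hmin : ∀ h, 1 < h → ¬h < c) (d : Γ) :
    ∃ p : ℤ, d ≤ c ^ p ∧ c ^ p ≤ d := by
  obtain ⟨p, hpd, hdp⟩ := exists_zpow_le_and_lt_zpow_succ harch hc d
  refine ⟨p, Std.not_lt.1 fun hlt => hmin ((c ^ p)⁻¹ * d) ?_ ?_, hpd⟩
  · exact lt_inv_mul_iff_mul_lt.2 (by simpa using hlt)
  · exact inv_mul_lt_iff_lt_mul.2 (by simpa [zpow_add_one] using hdp)

/-- Hölder's theorem, for a bi-invariant total preorder. -/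
theorem mul_le_mul_comm_of_archimedean (harch : ∀ {g : Γ}, 1 < g → ∀ h, ∃ n : ℕ, h < g ^ n)
    (a b : Γ) : a * b ≤ b * a := by
  by_contra hab
  set c := (b * a)⁻¹ * (a * b)
  have hc : 1 < c := lt_inv_mul_iff_mul_lt.2 (by simpa using Std.not_le.1 hab)
  have hbac : b * a * c = a * b := mul_inv_cancel_left _ _
  by_cases hmid : ∃ h, 1 < h ∧ h < c
  · obtain ⟨h, h1, hhc⟩ := hmid
    obtain ⟨e, he, hee⟩ := exists_one_lt_mul_self_le h1 hhc
    obtain ⟨p, hpa, hap⟩ := exists_zpow_le_and_lt_zpow_succ harch he a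
    obtain ⟨q, hqb, hbq⟩ := exists_zpow_le_and_lt_zpow_succ harch he b
    -- bracketing `a` and `b` between consecutive powers of `e` squeezes `c` below `e * e`
    have : e ^ (q + p) * c < e ^ (q + p) * (e * e) := calc
      e ^ (q + p) * c = e ^ q * e ^ p * c := by rw [zpow_add]
      _ ≤ b * a * c := mul_le_mul_left (mul_le_mul' hqb hpa) c
      _ = a * b := hbac
      _ < e ^ (p + 1) * b := mul_lt_mul_of_lt_of_le hap le_rfl
      _ ≤ e ^ (p + 1) * e ^ (q + 1) := mul_le_mul_right hbq.le _
      _ = e ^ (q + p) * (e * e) := by group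
    exact this.not_ge (mul_le_mul_right hee _)
  · have hmin (h : Γ) (h1 : 1 < h) : ¬h < c := fun hhc => hmid ⟨h, h1, hhc⟩
    obtain ⟨p, hap, hpa⟩ := exists_zpow_equiv_of_forall_not_lt harch hc hmin a
    obtain ⟨q, hbq, hqb⟩ := exists_zpow_equiv_of_forall_not_lt harch hc hmin b
    exact hab <| calc
      a * b ≤ c ^ p * c ^ q := mul_le_mul' hap hbq
      _ = c ^ q * c ^ p := zpow_mul_comm c p q
      _ ≤ b * a := mul_le_mul' hqb hpa

end Holder

structure IsFreeIncreasingAction (Γ : Type*) [Group Γ] [MulAction Γ ℝ] (s : Set ℝ) : Prop where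
  smul_mem (g : Γ) {x : ℝ} : x ∈ s → g • x ∈ s
  strictMonoOn (g : Γ) : StrictMonoOn (g • ·) s
  continuousOn (g : Γ) : ContinuousOn (g • ·) s
  smul_eq_self (g : Γ) {x y : ℝ} : x ∈ s → y ∈ s → g • x = x → g • y = y

namespace IsFreeIncreasingAction

variable {Γ : Type*} [Group Γ] [MulAction Γ ℝ] {s : Set ℝ} (hΓ : IsFreeIncreasingAction Γ s)
  (hs : ∀ u ∈ s, ∀ v ∈ s, IsClosed (Icc u v ∩ s))
include hΓ hs

theorem lt_smul_of_lt_smul {g : Γ} {x₀ x : ℝ} (hx₀ : x₀ ∈ s) (hg : x₀ < g • x₀) (hx : x ∈ s) :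
    x < g • x := by
  by_contra! hle
  have hmaps (k : Γ) : MapsTo (k • ·) s s := fun _ => hΓ.smul_mem k
  have hmono (k : Γ) : MonotoneOn (k • ·) s := (hΓ.strictMonoOn k).monotoneOn
  -- `g` or `g⁻¹` moves the ends of the segment between `x₀` and `x` towards each other
  obtain ⟨w, hws, hgw⟩ : ∃ w ∈ s, g • w = w := by
    rcases le_total x₀ x with hx₀x | hxx₀
    · exact exists_fixedPt_of_le_of_le (hs x₀ hx₀ x hx) (hmaps g) (hmono g) (hΓ.continuousOn g)
        hx₀ hx hx₀x hg.le hle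
    · have hx' : x ≤ g⁻¹ • x := by simpa using hmono g⁻¹ (hΓ.smul_mem g hx) hx hle
      have hx₀' : g⁻¹ • x₀ ≤ x₀ := by simpa using hmono g⁻¹ hx₀ (hΓ.smul_mem g hx₀) hg.le
      obtain ⟨w, hws, hw⟩ := exists_fixedPt_of_le_of_le (hs x hx x₀ hx₀) (hmaps g⁻¹) (hmono g⁻¹)
        (hΓ.continuousOn g⁻¹) hx hx₀ hxx₀ hx' hx₀'
      exact ⟨w, hws, (inv_smul_eq_iff.1 hw).symm⟩
  exact hg.ne' (hΓ.smul_eq_self g hws hx₀ hgw)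

theorem smul_lt_smul_of_smul_lt_smul {g h : Γ} {x y : ℝ} (hx : x ∈ s) (hy : y ∈ s)
    (hgh : g • x < h • x) : g • y < h • y := by
  have hx' : x < (g⁻¹ * h) • x := by
    simpa [mul_smul] using hΓ.strictMonoOn g⁻¹ (hΓ.smul_mem g hx) (hΓ.smul_mem h hx) hgh
  have hy' := hΓ.lt_smul_of_lt_smul hs hx hx' hy
  simpa [mul_smul] using hΓ.strictMonoOn g hy (hΓ.smul_mem _ hy) hy'

theorem smul_le_smul_of_smul_le_smul {g h : Γ} {x y : ℝ} (hx : x ∈ s) (hy : y ∈ s)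
    (hgh : g • x ≤ h • x) : g • y ≤ h • y :=
  not_lt.1 fun hlt => (hΓ.smul_lt_smul_of_smul_lt_smul hs hy hx hlt).not_ge hgh

theorem exists_lt_pow_smul {g : Γ} {x₀ y : ℝ} (hx₀ : x₀ ∈ s) (hg : x₀ < g • x₀) (hy : y ∈ s) :
    ∃ n : ℕ, y < g ^ n • x₀ := by
  simpa only [smul_iterate] using exists_lt_iterate_of_lt_apply (hs x₀ hx₀ y hy)
    (fun _ => hΓ.smul_mem g) (hΓ.continuousOn g)
    (fun _ hz => hΓ.lt_smul_of_lt_smul hs hx₀ hg hz) hx₀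

theorem smul_smul_comm (g h : Γ) {x : ℝ} (hx : x ∈ s) : g • h • x = h • g • x := by
  let : Preorder Γ := Preorder.lift (· • x)
  have : Std.Total (α := Γ) (· ≤ ·) := ⟨fun g h => le_total (g • x) (h • x)⟩
  have : MulLeftMono Γ := ⟨fun c g h (hgh : g • x ≤ h • x) => show (c * g) • x ≤ (c * h) • x by
    simpa only [mul_smul] using
      (hΓ.strictMonoOn c).monotoneOn (hΓ.smul_mem g hx) (hΓ.smul_mem h hx) hgh⟩
  have : MulRightMono Γ := ⟨fun c g h (hgh : g • x ≤ h • x) => show (g * c) • x ≤ (h * c) • x by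
    simpa only [mul_smul] using hΓ.smul_le_smul_of_smul_le_smul hs hx (hΓ.smul_mem c hx) hgh⟩
  have harch {g : Γ} (hg : 1 < g) (h : Γ) : ∃ n : ℕ, h < g ^ n :=
    hΓ.exists_lt_pow_smul hs hx ((one_smul Γ x).symm.trans_lt hg) (hΓ.smul_mem h hx)
  have hgh : (g * h) • x ≤ (h * g) • x := mul_le_mul_comm_of_archimedean harch g h
  have hhg : (h * g) • x ≤ (g * h) • x := mul_le_mul_comm_of_archimedean harch h g
  simpa only [mul_smul] using le_antisymm hgh hhg

end IsFreeIncreasingAction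

theorem apK_eq_ofSubtype (K : Set ℝ) [DecidablePred (· ∈ K)] (f : Equiv.Perm K) :
    apK K f = Equiv.Perm.ofSubtype f := by
  funext x
  by_cases hx : x ∈ K
  · simp [apK, hx, Equiv.Perm.ofSubtype_apply_of_mem]
  · simp [apK, hx, Equiv.Perm.ofSubtype_apply_of_not_mem]

namespace IncreasingOnK

variable {K I : Set ℝ} {f : Equiv.Perm K}

theorem strictMonoOn_s14 (hf : IncreasingOnK K f I) : StrictMonoOn (apK K f) (I ∩ K) := by
  obtain ⟨F, -, hF, -, -, hFf⟩ := hf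
  exact (hF.mono inter_subset_left).congr fun y hy => hFf y hy.1 hy.2

theorem continuousOn (hf : IncreasingOnK K f I) : ContinuousOn (apK K f) (I ∩ K) := by
  obtain ⟨F, F', -, hF', -, hFf⟩ := hf
  have hF : ContinuousOn F I := fun y hy => (hF' y hy).1.continuousWithinAt
  exact (hF.mono inter_subset_left).congr fun y hy => (hFf y hy.1 hy.2).symm

end IncreasingOnK

theorem holder_interval_abelian_general (K : Set ℝ) (hK : IsCantorInR K) (a b : ℝ)
    (G : Subgroup (Equiv.Perm K))
    (h1 : ∀ g ∈ G, apK K g '' (Set.Ioo a b ∩ K) = Set.Ioo a b ∩ K ∧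
      IncreasingOnK K g (Set.Ioo a b))
    (h2 : ∀ g ∈ G, (∃ x ∈ Set.Ioo a b ∩ K, apK K g x = x) →
      ∀ x ∈ Set.Ioo a b ∩ K, apK K g x = x) :
    ∀ g ∈ G, ∀ h ∈ G, ∀ x ∈ Set.Ioo a b ∩ K,
      apK K g (apK K h x) = apK K h (apK K g x) := by
  classical
  let : MulAction G ℝ := .compHom ℝ (Equiv.Perm.ofSubtype.comp G.subtype)
  have hsmul (g : G) (x : ℝ) : g • x = apK K g x := by rw [apK_eq_ofSubtype]; rfl
  have hG : IsFreeIncreasingAction G (Ioo a b ∩ K) := by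
    refine ⟨fun g x hx => ?_, fun g => ?_, fun g => ?_, fun g x y hx hy hgx => ?_⟩ <;>
      simp only [hsmul] at *
    · exact (h1 g g.2).1 ▸ mem_image_of_mem _ hx
    · exact (h1 g g.2).2.strictMonoOn_s14
    · exact (h1 g g.2).2.continuousOn
    · exact h2 g g.2 ⟨x, hx, hgx⟩ y hy
  have hs : ∀ u ∈ Ioo a b ∩ K, ∀ v ∈ Ioo a b ∩ K, IsClosed (Icc u v ∩ (Ioo a b ∩ K)) :=
    fun u hu v hv => by
      rw [← inter_assoc, inter_eq_left.2 (Icc_subset_Ioo hu.1.1 hv.1.2)]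
      exact isClosed_Icc.inter hK.2.1.isClosed
  intro g hg h hh x hx
  simpa only [hsmul] using hG.smul_smul_comm hs ⟨g, hg⟩ ⟨h, hh⟩ hx

/-- Hölder-type lemma on an open interval `I` with endpoints in
`K`: if every element of `G` preserves `I ∩ K`, is increasing on `I`, and is
the identity on `I ∩ K` as soon as it has a fixed point there, then the group
of restrictions to `I ∩ K` is abelian. -/
theorem holder_interval_abelian (K : Set ℝ) (hK : IsCantorInR K)
    (a b : ℝ) (hab : a < b) (ha : a ∈ K) (hb : b ∈ K)
    (hmeet : (Set.Ioo a b ∩ K).Nonempty)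
    (G : Subgroup (Equiv.Perm K))
    (hdiff : ∀ g ∈ G, MemDiff1 K g)
    (h1 : ∀ g ∈ G, apK K g '' (Set.Ioo a b ∩ K) = Set.Ioo a b ∩ K ∧
      IncreasingOnK K g (Set.Ioo a b))
    (h2 : ∀ g ∈ G, (∃ x ∈ Set.Ioo a b ∩ K, apK K g x = x) →
      ∀ x ∈ Set.Ioo a b ∩ K, apK K g x = x) :
    ∀ g ∈ G, ∀ h ∈ G, ∀ x ∈ Set.Ioo a b ∩ K,
      apK K g (apK K h x) = apK K h (apK K g x) :=
  holder_interval_abelian_general K hK a b G h1 h2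
end
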